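/- Let D be a domain in the d-regular tree T_d with R(D) ≠ ∅, and let B be (the vertex set of) a connected component of the subgraph induced on D \ R(D). Then F := B ∪ (R(D) ∩ ∂'B) is a full domain; that is, F is finite, induces a connected subgraph, |F| ≥ 2, and every vertex of ∂F has exactly one neighbor in F. -/
import Mathlib


/-- Inner vertex boundary of a finite vertex set `D`: vertices of `D` having a neighbor
outside `D`. -/
noncomputable def innerBoundary {V : Type*} (G : SimpleGraph V) (D : Finset V) : Finset V := by
  classical exact D.filter (fun x => ∃ y, y ∉ D ∧ G.Adj x y)

/-- Outer vertex boundary of `D`: vertices outside `D` having a neighbor in `D`. -/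
def outerBoundary {V : Type*} (G : SimpleGraph V) (D : Finset V) : Set V :=
  {y | y ∉ D ∧ ∃ x ∈ D, G.Adj x y}

/-- Number of neighbors of `x` lying in `D`. -/
noncomputable def degIn {V : Type*} (G : SimpleGraph V) (D : Finset V) (x : V) : ℕ := by
  classical exact (D.filter (fun y => G.Adj x y)).card

/-- A domain: a finite nonempty vertex set whose induced subgraph is connected. -/
def IsGraphDomain {V : Type*} (G : SimpleGraph V) (D : Finset V) : Prop :=
  D.Nonempty ∧ (G.induce (↑D : Set V)).Connected

/-- `G` is a `d`-regular tree: connected, acyclic, and every vertex has degree `d`. -/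
def IsRegularTree {V : Type*} (G : SimpleGraph V) (d : ℕ) : Prop :=
  G.Connected ∧ G.IsAcyclic ∧ ∀ v : V, (G.neighborSet v).ncard = d

/-- Boundary branching excess `τ(D) = Σ_{x ∈ ∂D} (deg_D(x) − 1)`. -/
noncomputable def tauD {V : Type*} (G : SimpleGraph V) (D : Finset V) : ℕ :=
  ∑ x ∈ innerBoundary G D, (degIn G D x - 1)

/-- Residual boundary `R(D) = {x ∈ ∂D : deg_D(x) ≥ 2}`. -/
noncomputable def residualBoundary {V : Type*} (G : SimpleGraph V) (D : Finset V) : Finset V := by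
  classical exact (innerBoundary G D).filter (fun x => 2 ≤ degIn G D x)

/-- `D` is isoperimetrically optimal: its inner boundary is smallest among all domains
of the same cardinality. -/
def IsOptimal {V : Type*} (G : SimpleGraph V) (D : Finset V) : Prop :=
  ∀ D' : Finset V, IsGraphDomain G D' → D'.card = D.card →
    (innerBoundary G D).card ≤ (innerBoundary G D').card

open SimpleGraph

section AuxLemmas
variable {V : Type*} {G T : SimpleGraph V} {D A : Finset V} {x b : V}

lemma mem_innerBoundary : x ∈ innerBoundary G D ↔ x ∈ D ∧ ∃ y, y ∉ D ∧ G.Adj x y := by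
  classical
  unfold innerBoundary
  simp [Finset.mem_filter]

lemma mem_residualBoundary :
    x ∈ residualBoundary G D ↔ x ∈ innerBoundary G D ∧ 2 ≤ degIn G D x := by
  classical
  unfold residualBoundary
  simp [Finset.mem_filter]

lemma degIn_le_of_subset (h : A ⊆ D) : degIn G A x ≤ degIn G D x := by
  classical
  unfold degIn
  exact Finset.card_le_card (Finset.filter_subset_filter _ h)

lemma one_le_degIn (h : ∃ y ∈ A, G.Adj x y) : 1 ≤ degIn G A x := by
  classical
  unfold degIn
  obtain ⟨y, hy, hadj⟩ := h
  exact Finset.card_pos.mpr ⟨y, Finset.mem_filter.mpr ⟨hy, hadj⟩⟩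

lemma degIn_eq_one_of (hbA : b ∈ A) (hadj : G.Adj x b)
    (huniq : ∀ z ∈ A, G.Adj x z → z = b) : degIn G A x = 1 := by
  classical
  unfold degIn
  rw [Finset.card_eq_one]
  refine ⟨b, ?_⟩
  ext z
  simp only [Finset.mem_filter, Finset.mem_singleton]
  constructor
  · rintro ⟨h1, h2⟩; exact huniq z h1 h2
  · rintro rfl; exact ⟨hbA, hadj⟩

lemma walk_in_set {S : Set V} (hS : (T.induce S).Connected) {b b' : V}
    (hb : b ∈ S) (hb' : b' ∈ S) : ∃ w : T.Walk b b', ∀ v ∈ w.support, v ∈ S := by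
  obtain ⟨w⟩ := hS.preconnected ⟨b, hb⟩ ⟨b', hb'⟩
  let f : T.induce S →g T := ⟨Subtype.val, fun {a b} h => h⟩
  refine ⟨w.map f, ?_⟩
  intro v hv
  rw [SimpleGraph.Walk.support_map] at hv
  obtain ⟨⟨u, hu⟩, _, rfl⟩ := List.mem_map.mp hv
  exact hu

lemma unique_nbr (hac : T.IsAcyclic) {S : Set V} (hS : (T.induce S).Connected)
    {x y z : V} (hx : x ∉ S) (hy : y ∈ S) (hz : z ∈ S)
    (hxy : T.Adj x y) (hxz : T.Adj x z) : y = z := by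
  classical
  obtain ⟨w, hw⟩ := walk_in_set hS hy hz
  have hxsup : x ∉ w.support := fun h => hx (hw x h)
  let W : T.Walk x z := SimpleGraph.Walk.cons hxy w
  have hpq := (isAcyclic_iff_path_unique.mp hac) W.toPath (SimpleGraph.Path.singleton hxz)
  have hedge : s(x, z) ∈ (W.toPath : T.Walk x z).edges := by
    rw [hpq]
    simp [SimpleGraph.Path.singleton]
  have hedge' : s(x, z) ∈ W.edges := SimpleGraph.Walk.edges_toPath_subset W hedge
  rw [SimpleGraph.Walk.edges_cons] at hedge'
  rcases List.mem_cons.mp hedge' with h | h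
  · rw [Sym2.eq_iff] at h
    rcases h with ⟨-, h⟩ | ⟨h1, h2⟩
    · exact h.symm
    · exact absurd h1 hxy.ne
  · exact absurd (SimpleGraph.Walk.fst_mem_support_of_mem_edges w h) hxsup

lemma no_adj_outer (hac : T.IsAcyclic) {S : Set V} (hS : (T.induce S).Connected)
    {x y b b' : V} (hx : x ∉ S) (hy : y ∉ S) (hb : b ∈ S) (hb' : b' ∈ S)
    (hxb : T.Adj x b) (hyb' : T.Adj y b') : ¬ T.Adj x y := by
  classical
  intro hxy
  obtain ⟨w, hw⟩ := walk_in_set hS hb hb'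
  let W : T.Walk x y := SimpleGraph.Walk.cons hxb (w.concat hyb'.symm)
  have hpq := (isAcyclic_iff_path_unique.mp hac) W.toPath (SimpleGraph.Path.singleton hxy)
  have hedge : s(x, y) ∈ (W.toPath : T.Walk x y).edges := by
    rw [hpq]; simp [SimpleGraph.Path.singleton]
  have hedge' : s(x, y) ∈ W.edges := SimpleGraph.Walk.edges_toPath_subset W hedge
  rw [SimpleGraph.Walk.edges_cons, SimpleGraph.Walk.edges_concat,
    List.concat_eq_append] at hedge'
  rcases List.mem_cons.mp hedge' with h | h
  · rw [Sym2.eq_iff] at h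
    rcases h with ⟨-, h⟩ | ⟨h1, h2⟩
    · exact hy (by rw [h]; exact hb)
    · exact hx (by rw [h1]; exact hb)
  · rcases List.mem_append.mp h with h | h
    · exact hx (hw x (SimpleGraph.Walk.fst_mem_support_of_mem_edges w h))
    · rw [List.mem_singleton, Sym2.eq_iff] at h
      rcases h with ⟨h1, -⟩ | ⟨h1, h2⟩
      · exact hx (by rw [h1]; exact hb')
      · exact hxy.ne h1

lemma first_exit {P : V → Prop} :
    ∀ {u v : V} (w : T.Walk u v), P u → ¬ P v →
      ∃ a c, P a ∧ ¬ P c ∧ T.Adj a c ∧ c ∈ w.support := by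
  intro u v w
  induction w with
  | nil => intro hu hv; exact absurd hu hv
  | @cons u a v h p ih =>
    intro hu hv
    by_cases hm : P a
    · obtain ⟨a', c, h1, h2, h3, h4⟩ := ih hm hv
      exact ⟨a', c, h1, h2, h3, by simp [h4]⟩
    · exact ⟨u, a, hu, hm, h, by simp⟩

lemma nbr_exists {F : Finset V} (hconn : (T.induce (↑F : Set V)).Connected)
    (h2 : 2 ≤ F.card) {x : V} (hx : x ∈ F) : ∃ y ∈ F, T.Adj x y := by
  obtain ⟨z, hz, hne⟩ := Finset.exists_mem_ne h2 x
  obtain ⟨w, hw⟩ := walk_in_set hconn (Finset.mem_coe.mpr hx) (Finset.mem_coe.mpr hz)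
  cases w with
  | nil => exact absurd rfl hne.symm
  | cons h p =>
    rename_i a
    exact ⟨a, Finset.mem_coe.mp (hw a (by simp)), h⟩

end AuxLemmas

/-- If `B` is a connected component of the induced subgraph on `D \ R(D)`, then
`F = B ∪ (R(D) ∩ ∂'B)` is a full domain: it is finite, connected, has at least two
vertices, and every vertex of `∂F` has exactly one neighbor in `F`. -/
theorem stmt_18 {V : Type*} (d : ℕ) (hd : 2 ≤ d) (T : SimpleGraph V)
    (hT : IsRegularTree T d) (D : Finset V) (hD : IsGraphDomain T D)
    (hR : (residualBoundary T D).Nonempty)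
    (B : Finset V) (hBD : B ⊆ D) (hBR : ∀ x ∈ B, x ∉ residualBoundary T D)
    (hBne : B.Nonempty) (hBconn : (T.induce (↑B : Set V)).Connected)
    (hBmax : ∀ x ∈ D, x ∉ residualBoundary T D → (∃ y ∈ B, T.Adj x y) → x ∈ B) :
    ∃ F : Finset V,
      (↑F : Set V) =
        (↑B : Set V) ∪ ((↑(residualBoundary T D) : Set V) ∩ outerBoundary T B) ∧
      2 ≤ F.card ∧ (T.induce (↑F : Set V)).Connected ∧
      ∀ x ∈ innerBoundary T F, degIn T F x = 1 := by
  classical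
  obtain ⟨-, hac, -⟩ := hT
  set R := residualBoundary T D with hRdef
  set F : Finset V := B ∪ R.filter (fun x => x ∈ outerBoundary T B) with hFdef
  have hRD : ∀ r ∈ R, r ∈ D := by
    intro r hr
    exact (mem_innerBoundary.mp (mem_residualBoundary.mp hr).1).1
  have hmemF : ∀ v, v ∈ F ↔ v ∈ B ∨ (v ∈ R ∧ v ∈ outerBoundary T B) := by
    intro v
    simp [hFdef, Finset.mem_union, Finset.mem_filter]
  have hBF : B ⊆ F := fun v hv => (hmemF v).mpr (Or.inl hv)
  have hFD : F ⊆ D := by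
    intro v hv
    rcases (hmemF v).mp hv with h | ⟨h, -⟩
    · exact hBD h
    · exact hRD v h
  have hcoe : (↑F : Set V) = (↑B : Set V) ∪ ((↑R : Set V) ∩ outerBoundary T B) := by
    ext v
    simp only [Finset.mem_coe, Set.mem_union, Set.mem_inter_iff, hmemF v]
  -- find an element of R ∩ ∂'B
  obtain ⟨r, hrR⟩ := hR
  obtain ⟨b0, hb0⟩ := hBne
  obtain ⟨w, hw⟩ := walk_in_set hD.2 (Finset.mem_coe.mpr (hBD hb0)) (Finset.mem_coe.mpr (hRD r hrR))
  have hrnB : r ∉ B := fun h => hBR r h hrR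
  obtain ⟨a, c, haB, hcB, hadjac, hcsup⟩ := first_exit (P := fun v => v ∈ B) w hb0 hrnB
  have hcD : c ∈ D := Finset.mem_coe.mp (hw c hcsup)
  have hcR : c ∈ R := by
    by_contra hc
    exact hcB (hBmax c hcD hc ⟨a, haB, hadjac.symm⟩)
  have hcO : c ∈ outerBoundary T B := ⟨hcB, a, haB, hadjac⟩
  have hcF : c ∈ F := (hmemF c).mpr (Or.inr ⟨hcR, hcO⟩)
  have hb0F : b0 ∈ F := hBF hb0
  have h2 : 2 ≤ F.card :=
    Finset.one_lt_card.mpr ⟨b0, hb0F, c, hcF, fun h => hcB (h ▸ hb0)⟩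
  -- connectivity
  have hconn : (T.induce (↑F : Set V)).Connected := by
    rw [connected_iff]
    refine ⟨?_, ⟨⟨b0, Finset.mem_coe.mpr hb0F⟩⟩⟩
    have reachB : ∀ (u v : V) (hu : u ∈ B) (hv : v ∈ B),
        (T.induce (↑F : Set V)).Reachable ⟨u, Finset.mem_coe.mpr (hBF hu)⟩
          ⟨v, Finset.mem_coe.mpr (hBF hv)⟩ := by
      intro u v hu hv
      obtain ⟨w'⟩ := hBconn.preconnected ⟨u, Finset.mem_coe.mpr hu⟩ ⟨v, Finset.mem_coe.mpr hv⟩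
      let g : T.induce (↑B : Set V) →g T.induce (↑F : Set V) :=
        ⟨fun p => ⟨p.1, Finset.mem_coe.mpr (hBF (Finset.mem_coe.mp p.2))⟩, fun {a b} h => h⟩
      exact ⟨w'.map g⟩
    have key : ∀ (u : V) (hu : u ∈ (↑F : Set V)), ∃ b, ∃ hb : b ∈ B,
        (T.induce (↑F : Set V)).Reachable ⟨u, hu⟩ ⟨b, Finset.mem_coe.mpr (hBF hb)⟩ := by
      intro u hu
      rcases (hmemF u).mp (Finset.mem_coe.mp hu) with h | ⟨-, hO⟩
      · exact ⟨u, h, Reachable.refl _⟩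
      · obtain ⟨hunB, b, hbB, hba⟩ := hO
        refine ⟨b, hbB, ?_⟩
        have hadj : (T.induce (↑F : Set V)).Adj ⟨u, hu⟩ ⟨b, Finset.mem_coe.mpr (hBF hbB)⟩ :=
          hba.symm
        exact hadj.reachable
    rintro ⟨u, hu⟩ ⟨v, hv⟩
    obtain ⟨bu, hbu, hru⟩ := key u hu
    obtain ⟨bv, hbv, hrv⟩ := key v hv
    exact hru.trans ((reachB bu bv hbu hbv).trans hrv.symm)
  refine ⟨F, hcoe, h2, hconn, ?_⟩
  -- leaf property
  intro x hx
  obtain ⟨hxF, y, hyF, hxy⟩ := mem_innerBoundary.mp hx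
  rcases (hmemF x).mp hxF with hxB | ⟨hxR, hxO⟩
  · -- x ∈ B
    have hynB : y ∉ B := fun h => hyF (hBF h)
    have hyD : y ∉ D := by
      intro hyD
      have hyR : y ∈ R := by
        by_contra hyR
        exact hynB (hBmax y hyD hyR ⟨x, hxB, hxy.symm⟩)
      exact hyF ((hmemF y).mpr (Or.inr ⟨hyR, hynB, x, hxB, hxy⟩))
    have hxI : x ∈ innerBoundary T D := mem_innerBoundary.mpr ⟨hBD hxB, y, hyD, hxy⟩
    have hxd : degIn T D x ≤ 1 := by
      by_contra h
      push_neg at h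
      exact hBR x hxB (mem_residualBoundary.mpr ⟨hxI, h⟩)
    have hle : degIn T F x ≤ degIn T D x := degIn_le_of_subset hFD
    have hge : 1 ≤ degIn T F x := one_le_degIn (nbr_exists hconn h2 hxF)
    omega
  · -- x ∈ R ∩ ∂'B
    obtain ⟨hxnB, b, hbB, hbx⟩ := hxO
    refine degIn_eq_one_of (hBF hbB) hbx.symm ?_
    intro z hzF hxz
    rcases (hmemF z).mp hzF with hzB | ⟨-, hzO⟩
    · exact unique_nbr hac hBconn (fun h => hxnB (Finset.mem_coe.mp h))
        (Finset.mem_coe.mpr hzB) (Finset.mem_coe.mpr hbB) hxz hbx.symm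
    · obtain ⟨hznB, b', hb'B, hb'z⟩ := hzO
      exact absurd hxz (no_adj_outer hac hBconn
        (fun h => hxnB (Finset.mem_coe.mp h)) (fun h => hznB (Finset.mem_coe.mp h))
        (Finset.mem_coe.mpr hbB) (Finset.mem_coe.mpr hb'B) hbx.symm hb'z.symm)
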